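/- The set {z ∈ ℂ : Re g(z) > 0} equals ℂ ∖ ((−∞,a] ∪ [b,+∞)). In other words, Re g(z) > 0 for every z not lying on the two real rays (−∞,a] and [b,+∞), and Re g(z) = 0 for every z on those rays. -/

import Mathlib

open Complex

lemma cpow_half_re_im {z : ℂ} (hz : z ≠ 0) :
    (z ^ ((1:ℂ)/2)).re = Real.exp (Real.log (‖z‖) / 2) * Real.cos (z.arg / 2) ∧
    (z ^ ((1:ℂ)/2)).im = Real.exp (Real.log (‖z‖) / 2) * Real.sin (z.arg / 2) := by
  rw [Complex.cpow_def_of_ne_zero hz, Complex.exp_re, Complex.exp_im]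
  have h1 : (Complex.log z * ((1:ℂ)/2)).re = Real.log (‖z‖) / 2 := by
    simp [Complex.mul_re, Complex.log_re]; ring
  have h2 : (Complex.log z * ((1:ℂ)/2)).im = z.arg / 2 := by
    simp [Complex.mul_im, Complex.log_im]; ring
  rw [h1, h2]; exact ⟨rfl, rfl⟩

lemma sqrtA {z : ℂ} (h : 0 < z.im) :
    0 < (z ^ ((1:ℂ)/2)).re ∧ 0 < (z ^ ((1:ℂ)/2)).im := by
  have hz : z ≠ 0 := fun hc => by simp [hc] at h
  obtain ⟨hre, him⟩ := cpow_half_re_im hz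
  have harg1 : 0 < z.arg := by
    rcases lt_or_eq_of_le (Complex.arg_nonneg_iff.2 h.le) with h' | h'
    · exact h'
    · exact absurd (Complex.arg_eq_zero_iff.1 h'.symm).2 h.ne'
  have harg2 : z.arg < Real.pi := Complex.arg_lt_pi_iff.2 (Or.inr h.ne')
  constructor
  · rw [hre]
    exact mul_pos (Real.exp_pos _) (Real.cos_pos_of_mem_Ioo
      ⟨by nlinarith [Real.pi_pos], by linarith⟩)
  · rw [him]
    exact mul_pos (Real.exp_pos _) (Real.sin_pos_of_pos_of_lt_pi (by linarith)
      (by nlinarith [Real.pi_pos]))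

lemma sqrtB {z : ℂ} (h : z.im < 0) :
    0 < (z ^ ((1:ℂ)/2)).re ∧ (z ^ ((1:ℂ)/2)).im < 0 := by
  have hz : z ≠ 0 := fun hc => by simp [hc] at h
  obtain ⟨hre, him⟩ := cpow_half_re_im hz
  have harg1 : -Real.pi < z.arg := Complex.neg_pi_lt_arg z
  have harg2 : z.arg < 0 := Complex.arg_neg_iff.2 h
  constructor
  · rw [hre]
    exact mul_pos (Real.exp_pos _) (Real.cos_pos_of_mem_Ioo
      ⟨by linarith, by nlinarith [Real.pi_pos]⟩)
  · rw [him]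
    have : Real.sin (z.arg / 2) < 0 :=
      Real.sin_neg_of_neg_of_neg_pi_lt (by linarith) (by linarith)
    nlinarith [Real.exp_pos (Real.log (‖z‖) / 2)]

lemma sqrtC {z : ℂ} (h : z.im = 0) (h2 : 0 < z.re) :
    0 < (z ^ ((1:ℂ)/2)).re ∧ (z ^ ((1:ℂ)/2)).im = 0 := by
  have hz : z ≠ 0 := fun hc => by simp [hc] at h2
  obtain ⟨hre, him⟩ := cpow_half_re_im hz
  have harg : z.arg = 0 := Complex.arg_eq_zero_iff.2 ⟨h2.le, h⟩
  rw [hre, him, harg]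
  simp [Real.exp_pos]

lemma sqrtD {z : ℂ} (h : z.im = 0) (h2 : z.re < 0) :
    (z ^ ((1:ℂ)/2)).re = 0 ∧ 0 < (z ^ ((1:ℂ)/2)).im := by
  have hz : z ≠ 0 := fun hc => by simp [hc] at h2
  obtain ⟨hre, him⟩ := cpow_half_re_im hz
  have harg : z.arg = Real.pi := Complex.arg_eq_pi_iff.2 ⟨h2, h⟩
  rw [hre, him, harg]
  simp [Real.exp_pos]

/-- The g-function `g(z) = ∓i√(z−a)√(z−b)` (sign `−` on the closed upper half-plane,
`+` on the open lower half-plane), with principal branches of the square root. -/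
noncomputable def gfun (a b : ℝ) (z : ℂ) : ℂ :=
  if 0 ≤ z.im then -Complex.I * (z - a) ^ ((1 : ℂ) / 2) * (z - b) ^ ((1 : ℂ) / 2)
  else Complex.I * (z - a) ^ ((1 : ℂ) / 2) * (z - b) ^ ((1 : ℂ) / 2)

theorem re_gfun_pos_iff (a b : ℝ) (hab : a < b) :
    ({z : ℂ | 0 < (gfun a b z).re} = {z : ℂ | ¬(z.im = 0 ∧ (z.re ≤ a ∨ b ≤ z.re))}) ∧
      (∀ z : ℂ, z.im = 0 ∧ (z.re ≤ a ∨ b ≤ z.re) → (gfun a b z).re = 0) := by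
  have key0 : ∀ z : ℂ, z.im = 0 ∧ (z.re ≤ a ∨ b ≤ z.re) → (gfun a b z).re = 0 := by
    rintro z ⟨him, hre⟩
    set u := (z - a) ^ ((1:ℂ)/2) with hu
    set v := (z - b) ^ ((1:ℂ)/2) with hv
    have hga : gfun a b z = -Complex.I * u * v := by
      rw [gfun, if_pos (le_of_eq him.symm)]
    have hus : (z - (a:ℂ)).im = 0 := by simp [him]
    have hvs : (z - (b:ℂ)).im = 0 := by simp [him]
    have hre_a : (z - (a:ℂ)).re = z.re - a := by simp
    have hre_b : (z - (b:ℂ)).re = z.re - b := by simp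
    have hkey : u.im * v.re + u.re * v.im = 0 := by
      rcases hre with h | h
      · rcases lt_or_eq_of_le h with h' | h'
        · have hu' := sqrtD hus (by rw [hre_a]; linarith)
          have hv' := sqrtD hvs (by rw [hre_b]; linarith)
          rw [hu'.1, hv'.1]; ring
        · have : u = 0 := by
            rw [hu]
            have : z - (a:ℂ) = 0 := by
              apply Complex.ext <;> simp [him, h']
            rw [this, Complex.zero_cpow (by norm_num)]
          simp [this]
      · rcases lt_or_eq_of_le h with h' | h'
        · have hu' := sqrtC hus (by rw [hre_a]; linarith)
          have hv' := sqrtC hvs (by rw [hre_b]; linarith)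
          rw [hu'.2, hv'.2]; ring
        · have : v = 0 := by
            rw [hv]
            have : z - (b:ℂ) = 0 := by
              apply Complex.ext <;> simp [him, h'.symm]
            rw [this, Complex.zero_cpow (by norm_num)]
          simp [this]
    rw [hga]
    simp only [Complex.mul_re, Complex.mul_im, Complex.neg_re, Complex.neg_im,
      Complex.I_re, Complex.I_im]
    nlinarith [hkey]
  refine ⟨?_, key0⟩
  ext z
  simp only [Set.mem_setOf_eq]
  constructor
  · intro hpos hcond
    rw [key0 z hcond] at hpos
    exact lt_irrefl 0 hpos
  · intro hcond
    set u := (z - a) ^ ((1:ℂ)/2) with hu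
    set v := (z - b) ^ ((1:ℂ)/2) with hv
    rcases lt_trichotomy z.im 0 with him | him | him
    · have hga : gfun a b z = Complex.I * u * v := by
        rw [gfun, if_neg (not_le.2 him)]
      have hu' := sqrtB (show (z - (a:ℂ)).im < 0 by simpa using him)
      have hv' := sqrtB (show (z - (b:ℂ)).im < 0 by simpa using him)
      rw [hga]
      simp only [Complex.mul_re, Complex.mul_im, Complex.I_re, Complex.I_im]
      nlinarith [hu'.1, hu'.2, hv'.1, hv'.2]
    · have hcond' : ¬(z.re ≤ a ∨ b ≤ z.re) := fun h => hcond ⟨him, h⟩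
      push_neg at hcond'
      obtain ⟨h1, h2⟩ := hcond'
      have hga : gfun a b z = -Complex.I * u * v := by
        rw [gfun, if_pos (le_of_eq him.symm)]
      have hu' := sqrtC (show (z - (a:ℂ)).im = 0 by simp [him])
        (show 0 < (z - (a:ℂ)).re by simp; linarith)
      have hv' := sqrtD (show (z - (b:ℂ)).im = 0 by simp [him])
        (show (z - (b:ℂ)).re < 0 by simp; linarith)
      rw [hga]
      simp only [Complex.mul_re, Complex.mul_im, Complex.neg_re, Complex.neg_im,
        Complex.I_re, Complex.I_im]
      nlinarith [hu'.1, hu'.2, hv'.1, hv'.2]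
    · have hga : gfun a b z = -Complex.I * u * v := by
        rw [gfun, if_pos him.le]
      have hu' := sqrtA (show 0 < (z - (a:ℂ)).im by simpa using him)
      have hv' := sqrtA (show 0 < (z - (b:ℂ)).im by simpa using him)
      rw [hga]
      simp only [Complex.mul_re, Complex.mul_im, Complex.neg_re, Complex.neg_im,
        Complex.I_re, Complex.I_im]
      nlinarith [hu'.1, hu'.2, hv'.1, hv'.2]
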